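/- arXiv:1806.06936 — 2 statements merged into one kernel-verified Lean document; each statement's English description precedes it below -/
import Mathlib

section
/- The second derivative of Γ satisfies Γ''(x) ≥ 8/(u-ℓ)² for every x in the open interval (ℓ, u). Consequently, Γ is strictly convex on (ℓ, u) and has a unique minimizer x* ∈ (ℓ, u). -/
/-!
Writing `ℓ = max (-Δ) xL` and `u = min Δ xR`, on `(ℓ, u)` the distance `x - ℓ` is one of
`x - xL`, `Δ + x` and `u - x` is one of `xR - x`, `Δ - x`. Hence `Γ''`, the sum of the four inverse
squares, dominates `(x - ℓ)⁻² + (u - x)⁻² ≥ 8 / (u - ℓ)²`, which gives strict convexity. In the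
same way `Γ'` is negative near `ℓ` and positive near `u`, so by Darboux it vanishes at some `c`,
which is a minimizer by convexity and the only one by strict convexity.
-/

open Set

lemma apply_min_le_add {α β : Type*} [LinearOrder α] [AddCommMonoid β] [PartialOrder β]
    [IsOrderedAddMonoid β] (f : α → β) {p q : α} (hp : 0 ≤ f p) (hq : 0 ≤ f q) :
    f (min p q) ≤ f p + f q := by
  rcases min_choice p q with h | h <;> rw [h]
  exacts [le_add_of_nonneg_right hq, le_add_of_nonneg_left hp]

lemma eight_div_add_sq_le {a b : ℝ} (ha : 0 < a) (hb : 0 < b) :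
    8 / (a + b) ^ 2 ≤ (a ^ 2)⁻¹ + (b ^ 2)⁻¹ :=
  calc 8 / (a + b) ^ 2 ≤ 2 / (a * b) := by
        rw [div_le_div_iff₀ (by positivity) (by positivity)]
        nlinarith [sq_nonneg (a - b), mul_pos ha hb]
    _ ≤ (a ^ 2)⁻¹ + (b ^ 2)⁻¹ := by
        have hsq : 0 ≤ (a⁻¹ - b⁻¹) ^ 2 := sq_nonneg _
        have hab : 2 / (a * b) = 2 * a⁻¹ * b⁻¹ := by field_simp
        rw [hab, ← inv_pow, ← inv_pow]
        nlinarith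

lemma ConvexOn.isMinOn_of_hasDerivAt_eq_zero {S : Set ℝ} {f : ℝ → ℝ} {x : ℝ}
    (hf : ConvexOn ℝ S f) (hx : x ∈ interior S) (hfx : HasDerivAt f 0 x) : IsMinOn f S x :=
  hf.isMinOn_of_rightDeriv_eq_zero hx (hfx.hasDerivWithinAt.derivWithin (uniqueDiffWithinAt_Ioi x))

noncomputable def logBarrier (xL xR Δ x : ℝ) : ℝ :=
  -Real.log (x - xL) - Real.log (xR - x) - Real.log (Δ + x) - Real.log (Δ - x)

noncomputable def logBarrierDeriv (xL xR Δ x : ℝ) : ℝ :=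
  -(x - xL)⁻¹ + (xR - x)⁻¹ - (Δ + x)⁻¹ + (Δ - x)⁻¹

noncomputable def logBarrierDeriv2 (xL xR Δ x : ℝ) : ℝ :=
  ((x - xL) ^ 2)⁻¹ + ((xR - x) ^ 2)⁻¹ + ((Δ + x) ^ 2)⁻¹ + ((Δ - x) ^ 2)⁻¹

section LogBarrier

variable {xL xR Δ x : ℝ}

lemma pos_of_mem_logBarrier_domain (hx : x ∈ Ioo (max (-Δ) xL) (min Δ xR)) :
    0 < x - xL ∧ 0 < xR - x ∧ 0 < Δ + x ∧ 0 < Δ - x := by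
  obtain ⟨h₁, h₂⟩ := hx
  rw [max_lt_iff] at h₁
  rw [lt_min_iff] at h₂
  refine ⟨?_, ?_, ?_, ?_⟩ <;> linarith [h₁.1, h₁.2, h₂.1, h₂.2]

lemma hasDerivAt_logBarrier (hx : x ∈ Ioo (max (-Δ) xL) (min Δ xR)) :
    HasDerivAt (logBarrier xL xR Δ) (logBarrierDeriv xL xR Δ x) x := by
  obtain ⟨h₁, h₂, h₃, h₄⟩ := pos_of_mem_logBarrier_domain hx
  have := (((((hasDerivAt_id x).sub_const xL).log h₁.ne').neg.sub
    (((hasDerivAt_id x).const_sub xR).log h₂.ne')).sub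
    (((hasDerivAt_id x).const_add Δ).log h₃.ne')).sub
    (((hasDerivAt_id x).const_sub Δ).log h₄.ne')
  refine this.congr_deriv ?_
  simp only [logBarrierDeriv, id, one_div, neg_div]
  ring

lemma hasDerivAt_logBarrierDeriv (hx : x ∈ Ioo (max (-Δ) xL) (min Δ xR)) :
    HasDerivAt (logBarrierDeriv xL xR Δ) (logBarrierDeriv2 xL xR Δ x) x := by
  obtain ⟨h₁, h₂, h₃, h₄⟩ := pos_of_mem_logBarrier_domain hx
  have := (((((hasDerivAt_id x).sub_const xL).inv h₁.ne').neg.add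
    (((hasDerivAt_id x).const_sub xR).inv h₂.ne')).sub
    (((hasDerivAt_id x).const_add Δ).inv h₃.ne')).add
    (((hasDerivAt_id x).const_sub Δ).inv h₄.ne')
  refine this.congr_deriv ?_
  simp only [logBarrierDeriv2, id, neg_div, one_div, neg_neg]
  ring

lemma deriv_deriv_logBarrier (hx : x ∈ Ioo (max (-Δ) xL) (min Δ xR)) :
    deriv (deriv (logBarrier xL xR Δ)) x = logBarrierDeriv2 xL xR Δ x := by
  refine ((hasDerivAt_logBarrierDeriv hx).congr_of_eventuallyEq ?_).deriv
  filter_upwards [isOpen_Ioo.mem_nhds hx] with y hy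
  exact (hasDerivAt_logBarrier hy).deriv

lemma sub_max_neg_eq_min_add (x : ℝ) : x - max (-Δ) xL = min (Δ + x) (x - xL) := by
  rw [← min_sub_sub_left, sub_neg_eq_add, add_comm]

lemma eight_div_sq_le_logBarrierDeriv2 (hx : x ∈ Ioo (max (-Δ) xL) (min Δ xR)) :
    8 / (min Δ xR - max (-Δ) xL) ^ 2 ≤ logBarrierDeriv2 xL xR Δ x := by
  have hsplit : min Δ xR - max (-Δ) xL = (x - max (-Δ) xL) + (min Δ xR - x) := by ring
  calc 8 / (min Δ xR - max (-Δ) xL) ^ 2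
      ≤ ((x - max (-Δ) xL) ^ 2)⁻¹ + ((min Δ xR - x) ^ 2)⁻¹ := by
        rw [hsplit]
        exact eight_div_add_sq_le (sub_pos.2 hx.1) (sub_pos.2 hx.2)
    _ ≤ (((Δ + x) ^ 2)⁻¹ + ((x - xL) ^ 2)⁻¹) + (((Δ - x) ^ 2)⁻¹ + ((xR - x) ^ 2)⁻¹) := by
        rw [sub_max_neg_eq_min_add, ← min_sub_sub_right]
        gcongr <;> exact apply_min_le_add (fun t : ℝ => (t ^ 2)⁻¹) (by positivity) (by positivity)
    _ = logBarrierDeriv2 xL xR Δ x := by unfold logBarrierDeriv2; ring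

lemma logBarrierDeriv_le (hx : x ∈ Ioo (max (-Δ) xL) (min Δ xR)) :
    logBarrierDeriv xL xR Δ x ≤ 2 * (min Δ xR - x)⁻¹ - (x - max (-Δ) xL)⁻¹ := by
  obtain ⟨h₁, -, h₃, -⟩ := pos_of_mem_logBarrier_domain hx
  have hu : 0 < min Δ xR - x := sub_pos.2 hx.2
  have hℓ : (x - max (-Δ) xL)⁻¹ ≤ (Δ + x)⁻¹ + (x - xL)⁻¹ := by
    rw [sub_max_neg_eq_min_add]
    exact apply_min_le_add (fun t : ℝ => t⁻¹) (inv_nonneg.2 h₃.le) (inv_nonneg.2 h₁.le)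
  have hR : (xR - x)⁻¹ ≤ (min Δ xR - x)⁻¹ := inv_anti₀ hu (by linarith [min_le_right Δ xR])
  have hΔ : (Δ - x)⁻¹ ≤ (min Δ xR - x)⁻¹ := inv_anti₀ hu (by linarith [min_le_left Δ xR])
  unfold logBarrierDeriv
  linarith

lemma le_logBarrierDeriv (hx : x ∈ Ioo (max (-Δ) xL) (min Δ xR)) :
    (min Δ xR - x)⁻¹ - 2 * (x - max (-Δ) xL)⁻¹ ≤ logBarrierDeriv xL xR Δ x := by
  obtain ⟨-, h₂, -, h₄⟩ := pos_of_mem_logBarrier_domain hx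
  have hℓ : 0 < x - max (-Δ) xL := sub_pos.2 hx.1
  have hu : (min Δ xR - x)⁻¹ ≤ (Δ - x)⁻¹ + (xR - x)⁻¹ := by
    rw [← min_sub_sub_right]
    exact apply_min_le_add (fun t : ℝ => t⁻¹) (inv_nonneg.2 h₄.le) (inv_nonneg.2 h₂.le)
  have hL : (x - xL)⁻¹ ≤ (x - max (-Δ) xL)⁻¹ := inv_anti₀ hℓ (by linarith [le_max_right (-Δ) xL])
  have hΔ : (Δ + x)⁻¹ ≤ (x - max (-Δ) xL)⁻¹ := inv_anti₀ hℓ (by linarith [le_max_left (-Δ) xL])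
  unfold logBarrierDeriv
  linarith

lemma exists_logBarrierDeriv_eq_zero (h : max (-Δ) xL < min Δ xR) :
    ∃ c ∈ Ioo (max (-Δ) xL) (min Δ xR), logBarrierDeriv xL xR Δ c = 0 := by
  set ℓ := max (-Δ) xL
  set u := min Δ xR
  -- the two bounds above give `Γ' ≤ -1/(3d)` at `ℓ + d` and `Γ' ≥ 1/(3d)` at `u - d`
  set d := (u - ℓ) / 4 with hd_def
  have hd : 0 < d := by positivity
  have hsub : Icc (ℓ + d) (u - d) ⊆ Ioo ℓ u := Icc_subset_Ioo (by linarith) (by linarith)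
  have hmem_left : ℓ + d ∈ Ioo ℓ u := hsub (left_mem_Icc.2 (by linarith))
  have hmem_right : u - d ∈ Ioo ℓ u := hsub (right_mem_Icc.2 (by linarith))
  have hthird : (3 * d)⁻¹ = 3⁻¹ * d⁻¹ := mul_inv 3 d
  have hd_inv : 0 < d⁻¹ := inv_pos.2 hd
  have hneg : logBarrierDeriv xL xR Δ (ℓ + d) < 0 := by
    have := logBarrierDeriv_le hmem_left
    rw [show u - (ℓ + d) = 3 * d by linarith, add_sub_cancel_left, hthird] at this
    linarith
  have hpos : 0 < logBarrierDeriv xL xR Δ (u - d) := by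
    have := le_logBarrierDeriv hmem_right
    rw [show u - d - ℓ = 3 * d by linarith, sub_sub_cancel, hthird] at this
    linarith
  obtain ⟨c, hc, hc0⟩ := exists_hasDerivWithinAt_eq_of_gt_of_lt (by linarith)
    (fun y hy => (hasDerivAt_logBarrier (hsub hy)).hasDerivWithinAt) hneg hpos
  exact ⟨c, hsub (Ioo_subset_Icc_self hc), hc0⟩

lemma strictConvexOn_logBarrier :
    StrictConvexOn ℝ (Ioo (max (-Δ) xL) (min Δ xR)) (logBarrier xL xR Δ) := by
  refine strictConvexOn_of_deriv2_pos' (convex_Ioo _ _)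
    (fun x hx => (hasDerivAt_logBarrier hx).continuousAt.continuousWithinAt) fun x hx => ?_
  have hpos : 0 < 8 / (min Δ xR - max (-Δ) xL) ^ 2 :=
    div_pos (by norm_num) (pow_pos (sub_pos.2 (hx.1.trans hx.2)) 2)
  show 0 < deriv (deriv (logBarrier xL xR Δ)) x
  rw [deriv_deriv_logBarrier hx]
  exact hpos.trans_le (eight_div_sq_le_logBarrierDeriv2 hx)

end LogBarrier

theorem stmt_7_general (xL xR Δ : ℝ) (ℓ u : ℝ)
    (hℓ : ℓ = max (-Δ) xL) (hu : u = min Δ xR) (hℓu : ℓ < u)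
    (Γ : ℝ → ℝ)
    (hΓ : ∀ x, Γ x = -Real.log (x - xL) - Real.log (xR - x)
      - Real.log (Δ + x) - Real.log (Δ - x)) :
    (∀ x ∈ Set.Ioo ℓ u, 8 / (u - ℓ) ^ 2 ≤ deriv (deriv Γ) x) ∧
    StrictConvexOn ℝ (Set.Ioo ℓ u) Γ ∧
    (∃! xstar, xstar ∈ Set.Ioo ℓ u ∧ IsMinOn Γ (Set.Ioo ℓ u) xstar) := by
  obtain rfl : Γ = logBarrier xL xR Δ := funext hΓ
  subst hℓ hu
  have hconv := strictConvexOn_logBarrier (xL := xL) (xR := xR) (Δ := Δ)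
  obtain ⟨c, hc, hc0⟩ := exists_logBarrierDeriv_eq_zero hℓu
  have hmin : IsMinOn (logBarrier xL xR Δ) (Ioo (max (-Δ) xL) (min Δ xR)) c :=
    hconv.convexOn.isMinOn_of_hasDerivAt_eq_zero (by rwa [interior_Ioo])
      (hc0 ▸ hasDerivAt_logBarrier hc)
  refine ⟨fun x hx => ?_, hconv, c, ⟨hc, hmin⟩, fun y hy => hconv.eq_of_isMinOn hy.2 hmin hy.1 hc⟩
  rw [deriv_deriv_logBarrier hx]
  exact eight_div_sq_le_logBarrierDeriv2 hx

/-- `Γ''(x) ≥ 8/(u-ℓ)²` on `(ℓ, u)`; consequently `Γ` is strictly convex on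
`(ℓ, u)` and has a unique minimizer `x* ∈ (ℓ, u)`. -/
theorem stmt_7 (xL xR Δ : ℝ) (hΔ : 0 < Δ) (ℓ u : ℝ)
    (hℓ : ℓ = max (-Δ) xL) (hu : u = min Δ xR) (hℓu : ℓ < u)
    (Γ : ℝ → ℝ)
    (hΓ : ∀ x, Γ x = -Real.log (x - xL) - Real.log (xR - x)
      - Real.log (Δ + x) - Real.log (Δ - x)) :
    (∀ x ∈ Set.Ioo ℓ u, 8 / (u - ℓ) ^ 2 ≤ deriv (deriv Γ) x) ∧
    StrictConvexOn ℝ (Set.Ioo ℓ u) Γ ∧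
    (∃! xstar, xstar ∈ Set.Ioo ℓ u ∧ IsMinOn Γ (Set.Ioo ℓ u) xstar) :=
  stmt_7_general xL xR Δ ℓ u hℓ hu hℓu Γ hΓ
end

section
/- Assume ψ := q̂ + (τ_F/2)·Γ_LR is convex on Ω. Then for every parameter π ∈ (0, τ_F], the function φ³_π(x) := (8·τ_F/π)·((2/τ_F)·q̂(x) + 2·Γ_LR(x)) + 16·Γ_Δ(x) is self-concordant on Ω. -/
/-!
Along a line `t ↦ x + t • v`, write `q, L, D` for the restrictions of `q̂, Γ_LR, Γ_Δ`. With
`K = 8τ_F/π ≥ 8` one has `φ'' = (16/π) ψ'' + K L'' + 16 D''` and, `q` being quadratic,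
`φ''' = 2K L''' + 16 D'''`. Convexity gives `ψ'' ≥ 0`, and `L`, `D` are sums of terms
`-log(a + b t)`, each satisfying `|f'''| = 2 f''^{3/2}`. Since `u ↦ u^{3/2}` is superadditive,
the inequality `|d₃| ≤ 2 d₂^{3/2}` is stable under sums of pairs `(d₂, d₃)` and under
`(d₂, d₃) ↦ (c d₂, e d₃)` whenever `|e| ≤ c^{3/2}`; this applies with `(c, e) = (K, 2K)`
because `K ≥ 4`, and with `(c, e) = (16, 16)`.
-/

open Topology Set

section SelfConcordance

open Real Nat

def SelfConcordantIneq (d₂ d₃ : ℝ) : Prop :=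
  0 ≤ d₂ ∧ |d₃| ≤ 2 * d₂ ^ ((3 : ℝ) / 2)

namespace SelfConcordantIneq

theorem of_nonneg {d : ℝ} (h : 0 ≤ d) : SelfConcordantIneq d 0 :=
  ⟨h, by simpa using mul_nonneg zero_le_two (rpow_nonneg h _)⟩

theorem add {a₂ a₃ b₂ b₃ : ℝ} (ha : SelfConcordantIneq a₂ a₃) (hb : SelfConcordantIneq b₂ b₃) :
    SelfConcordantIneq (a₂ + b₂) (a₃ + b₃) := by
  refine ⟨add_nonneg ha.1 hb.1, ?_⟩
  calc |a₃ + b₃| ≤ |a₃| + |b₃| := abs_add_le _ _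
    _ ≤ 2 * (a₂ ^ ((3 : ℝ) / 2) + b₂ ^ ((3 : ℝ) / 2)) := by linarith [ha.2, hb.2]
    _ ≤ 2 * (a₂ + b₂) ^ ((3 : ℝ) / 2) := by
      gcongr
      exact add_rpow_le_rpow_add ha.1 hb.1 (by norm_num)

theorem mul {d₂ d₃ c e : ℝ} (h : SelfConcordantIneq d₂ d₃) (hc : 0 ≤ c)
    (he : |e| ≤ c ^ ((3 : ℝ) / 2)) : SelfConcordantIneq (c * d₂) (e * d₃) := by
  refine ⟨mul_nonneg hc h.1, ?_⟩
  rw [abs_mul, mul_rpow hc h.1]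
  calc |e| * |d₃| ≤ c ^ ((3 : ℝ) / 2) * (2 * d₂ ^ ((3 : ℝ) / 2)) :=
        mul_le_mul he h.2 (abs_nonneg _) (rpow_nonneg hc _)
    _ = _ := by ring

theorem sq_neg_two_mul_pow_three (r : ℝ) : SelfConcordantIneq (r ^ 2) (-2 * r ^ 3) := by
  have h : (r ^ 2) ^ ((3 : ℝ) / 2) = |r| ^ 3 := by
    rw [← sq_abs, ← rpow_natCast, ← rpow_natCast, ← rpow_mul (abs_nonneg r)]
    norm_num
  refine ⟨sq_nonneg r, le_of_eq ?_⟩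
  rw [h, abs_mul, abs_pow]
  norm_num

end SelfConcordantIneq

theorem two_mul_le_rpow_three_halves {c : ℝ} (hc : 4 ≤ c) : 2 * c ≤ c ^ ((3 : ℝ) / 2) := by
  have h2 : 2 ≤ √c := by rw [le_sqrt (by norm_num) (by linarith)]; linarith
  calc 2 * c ≤ c * √c := by nlinarith
    _ = c ^ ((3 : ℝ) / 2) := by
      rw [sqrt_eq_rpow, ← rpow_one_add' (by linarith) (by norm_num)]
      norm_num

def SelfConcordantAt (f : ℝ → ℝ) (t : ℝ) : Prop :=
  ContDiffAt ℝ 3 f t ∧ SelfConcordantIneq (iteratedDeriv 2 f t) (iteratedDeriv 3 f t)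

namespace SelfConcordantAt

variable {t : ℝ}

theorem add {f g : ℝ → ℝ} (hf : SelfConcordantAt f t) (hg : SelfConcordantAt g t) :
    SelfConcordantAt (fun s => f s + g s) t := by
  refine ⟨hf.1.add hg.1, ?_⟩
  rw [iteratedDeriv_fun_add (hf.1.of_le (by norm_num)) (hg.1.of_le (by norm_num)),
    iteratedDeriv_fun_add hf.1 hg.1]
  exact hf.2.add hg.2

theorem sum {ι : Type*} (s : Finset ι) {f : ι → ℝ → ℝ} (h : ∀ i ∈ s, SelfConcordantAt (f i) t) :
    SelfConcordantAt (fun u => ∑ i ∈ s, f i u) t := by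
  rw [← Finset.sum_fn]
  refine Finset.sum_induction f (SelfConcordantAt · t) (fun _ _ hf hg => hf.add hg) ?_ h
  exact ⟨contDiffAt_const, by simpa using SelfConcordantIneq.of_nonneg le_rfl⟩

end SelfConcordantAt

theorem iteratedDeriv_succ_log_affine {a b t : ℝ} (h : a + b * t ≠ 0) (k : ℕ) :
    iteratedDeriv (k + 1) (fun s => log (a + b * s)) t =
      (-1) ^ k * k ! * (b / (a + b * t)) ^ (k + 1) := by
  have hderiv : deriv (fun s => log (a + b * s)) =ᶠ[𝓝 t] fun s => b * (b * s + a)⁻¹ := by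
    filter_upwards [(show Continuous fun s => a + b * s by fun_prop).continuousAt.eventually_ne h]
      with s hs
    rw [((((hasDerivAt_id' s).const_mul b).const_add a).log hs).deriv]
    simp [div_eq_mul_inv, add_comm]
  rw [iteratedDeriv_succ', hderiv.iteratedDeriv_eq, iteratedDeriv_const_mul_field,
    iteratedDeriv_eq_iterate, iter_deriv_inv_linear,
    show (-1 - k : ℤ) = -((k + 1 : ℕ) : ℤ) by push_cast; ring]
  simp only [zpow_neg, zpow_natCast, div_pow, add_comm (b * t)]
  ring

theorem selfConcordantAt_neg_log_affine {a b t : ℝ} (h : a + b * t ≠ 0) :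
    SelfConcordantAt (fun s => -log (a + b * s)) t := by
  refine ⟨by fun_prop (disch := exact h), ?_⟩
  simpa [iteratedDeriv_succ_log_affine h] using
    SelfConcordantIneq.sq_neg_two_mul_pow_three (b / (a + b * t))

theorem selfConcordantAt_boxBarrier_line {ι : Type*} [Fintype ι] {l u x : ι → ℝ}
    (hx : ∀ j, l j < x j ∧ x j < u j) (v : ι → ℝ) :
    SelfConcordantAt
      (fun t => -∑ j, (log (x j + t * v j - l j) + log (u j - (x j + t * v j)))) 0 := by
  have h : (fun t => -∑ j, (log (x j + t * v j - l j) + log (u j - (x j + t * v j)))) =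
      fun t => ∑ j, (-log ((x j - l j) + v j * t) + -log ((u j - x j) + -v j * t)) := by
    funext t
    rw [← Finset.sum_neg_distrib]
    refine Finset.sum_congr rfl fun j _ => ?_
    rw [neg_add]
    congr 3 <;> ring
  rw [h]
  exact .sum _ fun j _ => (selfConcordantAt_neg_log_affine (by linarith [hx j])).add
    (selfConcordantAt_neg_log_affine (by linarith [hx j]))

theorem selfConcordantIneq_phi3 {τ p q₂ L₂ L₃ D₂ D₃ : ℝ} (hp : 0 < p) (hpτ : p ≤ τ)
    (hL : SelfConcordantIneq L₂ L₃) (hD : SelfConcordantIneq D₂ D₃)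
    (hψ : 0 ≤ q₂ + τ / 2 * L₂) :
    SelfConcordantIneq (8 * τ / p * (2 / τ * q₂ + 2 * L₂) + 16 * D₂)
      (8 * τ / p * (2 * L₃) + 16 * D₃) := by
  have hτ : 0 < τ := hp.trans_le hpτ
  have hK : 4 ≤ 8 * τ / p := by rw [le_div_iff₀ hp]; linarith
  have h2K : |2 * (8 * τ / p)| ≤ (8 * τ / p) ^ ((3 : ℝ) / 2) := by
    rw [abs_of_pos (by positivity)]
    exact two_mul_le_rpow_three_halves hK
  have h16 : |(16 : ℝ)| ≤ 16 ^ ((3 : ℝ) / 2) := by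
    rw [abs_of_pos (by norm_num)]
    linarith [two_mul_le_rpow_three_halves (c := 16) (by norm_num)]
  have key := (SelfConcordantIneq.of_nonneg (mul_nonneg (by positivity : (0 : ℝ) ≤ 16 / p) hψ)).add
    ((hL.mul (by positivity) h2K).add (hD.mul (by norm_num) h16))
  convert key using 1
  · field_simp
    ring
  · ring

end SelfConcordance

theorem iteratedDeriv_three_quadratic (α β γ t : ℝ) :
    iteratedDeriv 3 (fun s => α + β * s + γ * s ^ 2) t = 0 := by
  rw [iteratedDeriv_fun_add (by fun_prop) (by fun_prop), iteratedDeriv_const_add (by norm_num),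
    iteratedDeriv_const_mul_field, iteratedDeriv_const_mul_field, iteratedDeriv_pow]
  simp [iteratedDeriv_succ]

theorem iteratedDeriv_three_quadratic_along_line {ι : Type*} [Fintype ι] (Q : Matrix ι ι ℝ)
    (c x v : ι → ℝ) (t₀ : ℝ) :
    iteratedDeriv 3 (fun t => (1 / 2) * ∑ i, ∑ j, Q i j * (x i + t * v i) * (x j + t * v j) +
      ∑ i, c i * (x i + t * v i)) t₀ = 0 := by
  convert iteratedDeriv_three_quadratic
    ((1 / 2) * ∑ i, ∑ j, Q i j * x i * x j + ∑ i, c i * x i)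
    ((1 / 2) * ∑ i, ∑ j, Q i j * (x i * v j + v i * x j) + ∑ i, c i * v i)
    ((1 / 2) * ∑ i, ∑ j, Q i j * v i * v j) t₀ using 2
  funext t
  have hquad : ∀ i j, Q i j * (x i + t * v i) * (x j + t * v j) =
      Q i j * x i * x j + Q i j * (x i * v j + v i * x j) * t + Q i j * v i * v j * t ^ 2 :=
    fun _ _ => by ring
  have hlin : ∀ i, c i * (x i + t * v i) = c i * x i + c i * v i * t := fun _ => by ring
  simp only [hquad, hlin, Finset.sum_add_distrib, ← Finset.sum_mul]
  ring

theorem iteratedDeriv_const_mul_add_const_mul {f g : ℝ → ℝ} {t : ℝ} {n : WithTop ℕ∞} {k : ℕ}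
    (hf : ContDiffAt ℝ n f t) (hg : ContDiffAt ℝ n g t) (hk : k ≤ n) (a b : ℝ) :
    iteratedDeriv k (fun s => a * f s + b * g s) t =
      a * iteratedDeriv k f t + b * iteratedDeriv k g t := by
  rw [iteratedDeriv_fun_add ((contDiffAt_const.mul hf).of_le hk)
    ((contDiffAt_const.mul hg).of_le hk), iteratedDeriv_const_mul_field,
    iteratedDeriv_const_mul_field]

theorem ConvexOn.iteratedDeriv_two_nonneg {f : ℝ → ℝ} {s : Set ℝ} {t : ℝ}
    (hf : ConvexOn ℝ s f) (hs : s ∈ 𝓝 t) (h2 : ContDiffAt ℝ 2 f t) :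
    0 ≤ iteratedDeriv 2 f t := by
  obtain ⟨ε, hε, hball⟩ := Metric.mem_nhds_iff.1
    (Filter.inter_mem hs ((h2.eventually (by simp)).mono fun _ h => h.differentiableAt (by simp)))
  have hmono : MonotoneOn (deriv f) (Metric.ball t ε) :=
    (hf.subset (fun _ hy => (hball hy).1) (convex_ball t ε)).monotoneOn_deriv
      fun _ hy => (hball hy).2
  rw [iteratedDeriv_succ, iteratedDeriv_one,
    ← derivWithin_of_mem_nhds (Metric.ball_mem_nhds t hε)]
  exact hmono.derivWithin_nonneg

section Line

variable {E F : Type*} [NormedAddCommGroup E] [NormedSpace ℝ E] [NormedAddCommGroup F]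
  [NormedSpace ℝ F] {n : WithTop ℕ∞} {f : E → F} {x : E}

theorem ContDiffAt.comp_add_smul (hf : ContDiffAt ℝ n f x) (v : E) :
    ContDiffAt ℝ n (fun t : ℝ => f (x + t • v)) 0 :=
  ContDiffAt.comp (g := f) 0 (by simpa using hf) (by fun_prop)

theorem iteratedFDeriv_apply_const_eq_iteratedDeriv_line {k : ℕ} (hf : ContDiffAt ℝ n f x)
    (hk : k ≤ n) (v : E) :
    iteratedFDeriv ℝ k f x (fun _ => v) = iteratedDeriv k (fun t : ℝ => f (x + t • v)) 0 := by
  obtain ⟨u, hu, hxu, hfu⟩ := ContDiffWithinAt.contDiffOn' le_rfl (by simp) (hf.of_le hk)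
  rw [insert_eq_of_mem (mem_univ x), univ_inter] at hfu
  set s := (fun z => x + z) ⁻¹' u
  set L : ℝ →L[ℝ] E := ContinuousLinearMap.smulRight (1 : ℝ →L[ℝ] ℝ) v
  have hs : IsOpen s := hu.preimage (by fun_prop)
  have hLs : IsOpen (L ⁻¹' s) := hs.preimage L.continuous
  have h0 : (0 : E) ∈ s := by simpa [s] using hxu
  have hF : ContDiffOn ℝ k (fun z => f (x + z)) s := hfu.comp (by fun_prop) fun _ hz => hz
  calc iteratedFDeriv ℝ k f x (fun _ => v)
      = iteratedFDerivWithin ℝ k (fun z => f (x + z)) s 0 (fun _ => L 1) := by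
        rw [iteratedFDerivWithin_of_isOpen k hs h0, iteratedFDeriv_comp_add_left, add_zero]
        simp [L]
    _ = iteratedFDeriv ℝ k ((fun z => f (x + z)) ∘ L) 0 (fun _ => 1) := by
        rw [← iteratedFDerivWithin_of_isOpen k hLs (by simpa using h0),
          L.iteratedFDerivWithin_comp_right hF hs.uniqueDiffOn hLs.uniqueDiffOn
            (by simpa using h0) le_rfl, map_zero]
        rfl
    _ = iteratedDeriv k (fun t : ℝ => f (x + t • v)) 0 := by
        rw [iteratedFDeriv_apply_eq_iteratedDeriv_mul_prod]
        simp [L, Function.comp_def]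

theorem ConvexOn.iteratedDeriv_two_line_nonneg {f : E → ℝ} {s : Set E} (hf : ConvexOn ℝ s f)
    (hs : s ∈ 𝓝 x) (h2 : ContDiffAt ℝ 2 f x) (v : E) :
    0 ≤ iteratedDeriv 2 (fun t : ℝ => f (x + t • v)) 0 := by
  refine ConvexOn.iteratedDeriv_two_nonneg (s := (fun t : ℝ => x + t • v) ⁻¹' s)
    ((hf.translate_right x).comp_linearMap (LinearMap.toSpanSingleton ℝ E v)) ?_
    (h2.comp_add_smul v)
  exact (show Continuous fun t : ℝ => x + t • v by fun_prop).continuousAt.preimage_mem_nhds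
    (by simpa using hs)

end Line

theorem isOpen_setOf_forall_lt_and_lt {ι : Type*} [Finite ι] (l u : ι → ℝ) :
    IsOpen {x : EuclideanSpace ℝ ι | ∀ j, l j < x j ∧ x j < u j} := by
  simp only [ofPred_forall, ofPred_and]
  exact isOpen_iInter_of_finite fun j =>
    (isOpen_lt (by fun_prop) (by fun_prop)).inter (isOpen_lt (by fun_prop) (by fun_prop))

theorem stmt_16_general (n : ℕ) (Q : Matrix (Fin n) (Fin n) ℝ)
    (c xL xR : EuclideanSpace ℝ (Fin n)) (Δ τF : ℝ)
    (qhat ΓLR ΓΔ : EuclideanSpace ℝ (Fin n) → ℝ)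
    (hqhat : ∀ x, qhat x = (1 / 2) * ∑ i, ∑ j, Q i j * x i * x j + ∑ i, c i * x i)
    (hΓLR : ∀ x, ΓLR x = -∑ j, (Real.log (x j - xL j) + Real.log (xR j - x j)))
    (hΓΔ : ∀ x, ΓΔ x = -∑ j, (Real.log (Δ + x j) + Real.log (Δ - x j)))
    (B S Ω : Set (EuclideanSpace ℝ (Fin n)))
    (hB : B = {x | ∀ j, xL j < x j ∧ x j < xR j})
    (hS : S = {x | ∀ j, -Δ < x j ∧ x j < Δ})
    (hΩ : Ω = B ∩ S)
    (hψ : ConvexOn ℝ Ω (fun x => qhat x + (τF / 2) * ΓLR x)) :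
    ∀ π : ℝ, 0 < π → π ≤ τF →
      ∀ x ∈ Ω, ∀ v : EuclideanSpace ℝ (Fin n),
        0 ≤ iteratedFDeriv ℝ 2
          (fun y => (8 * τF / π) * ((2 / τF) * qhat y + 2 * ΓLR y) + 16 * ΓΔ y) x ![v, v] ∧
        |iteratedFDeriv ℝ 3
          (fun y => (8 * τF / π) * ((2 / τF) * qhat y + 2 * ΓLR y) + 16 * ΓΔ y) x ![v, v, v]| ≤
          2 * (iteratedFDeriv ℝ 2
            (fun y => (8 * τF / π) * ((2 / τF) * qhat y + 2 * ΓLR y) + 16 * ΓΔ y) x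
              ![v, v]) ^ ((3 : ℝ) / 2) := by
  intro π hπ hπτ x hx v
  subst hΩ hB hS
  obtain ⟨hxB, hxS⟩ := hx
  have hnhds := ((isOpen_setOf_forall_lt_and_lt xL xR).inter
    (isOpen_setOf_forall_lt_and_lt (fun _ => -Δ) fun _ => Δ)).mem_nhds ⟨hxB, hxS⟩
  have hqC : ContDiffAt ℝ 3 qhat x := by rw [funext hqhat]; fun_prop
  have hLC : ContDiffAt ℝ 3 ΓLR x := by
    rw [funext hΓLR]; fun_prop (disch := intros; linarith [hxB ‹_›])
  have hDC : ContDiffAt ℝ 3 ΓΔ x := by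
    rw [funext hΓΔ]; fun_prop (disch := intros; linarith [hxS ‹_›])
  have hq := hqC.comp_add_smul v
  have hq3 : iteratedDeriv 3 (fun t : ℝ => qhat (x + t • v)) 0 = 0 := by
    simpa [hqhat] using iteratedDeriv_three_quadratic_along_line Q c x v 0
  have hL : SelfConcordantAt (fun t : ℝ => ΓLR (x + t • v)) 0 := by
    simpa [hΓLR] using selfConcordantAt_boxBarrier_line hxB v
  -- `Γ_Δ` is the same box barrier, with bounds `-Δ` and `Δ`.
  have hD : SelfConcordantAt (fun t : ℝ => ΓΔ (x + t • v)) 0 := by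
    simpa [hΓΔ, add_comm] using selfConcordantAt_boxBarrier_line hxS v
  have hψ2 := hψ.iteratedDeriv_two_line_nonneg hnhds
    ((hqC.add (contDiffAt_const.mul hLC)).of_le (by norm_num)) v
  rw [iteratedDeriv_fun_add (hq.of_le (by norm_num)) ((contDiffAt_const.mul hL.1).of_le
    (by norm_num)), iteratedDeriv_const_mul_field] at hψ2
  have hA : ContDiffAt ℝ 3 (fun t : ℝ => 2 / τF * qhat (x + t • v) + 2 * ΓLR (x + t • v)) 0 :=
    (contDiffAt_const.mul hq).add (contDiffAt_const.mul hL.1)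
  have hv2 : ![v, v] = fun _ => v := by ext i; fin_cases i <;> rfl
  have hv3 : ![v, v, v] = fun _ => v := by ext i; fin_cases i <;> rfl
  rw [hv3, hv2, iteratedFDeriv_apply_const_eq_iteratedDeriv_line (n := 3) (by fun_prop) le_rfl v,
    iteratedFDeriv_apply_const_eq_iteratedDeriv_line (n := 3) (by fun_prop) (by norm_num) v,
    iteratedDeriv_const_mul_add_const_mul hA hD.1 le_rfl,
    iteratedDeriv_const_mul_add_const_mul hA hD.1 (by norm_num),
    iteratedDeriv_const_mul_add_const_mul hq hL.1 le_rfl,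
    iteratedDeriv_const_mul_add_const_mul hq hL.1 (by norm_num), hq3, mul_zero, zero_add]
  exact selfConcordantIneq_phi3 hπ hπτ hL.2 hD.2 hψ2

/-- If `ψ := q̂ + (τ_F/2)·Γ_LR` is convex on `Ω`, then for every
`π ∈ (0, τ_F]` the function
`φ³_π(x) := (8·τ_F/π)·((2/τ_F)·q̂(x) + 2·Γ_LR(x)) + 16·Γ_Δ(x)` is self-concordant
on `Ω` (in the directional-derivative sense). -/
theorem stmt_16 (n : ℕ) (Q : Matrix (Fin n) (Fin n) ℝ) (hQ : Q.IsSymm)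
    (c xL xR : EuclideanSpace ℝ (Fin n)) (Δ τF : ℝ) (hΔ : 0 < Δ) (hτF : 0 < τF)
    (qhat ΓLR ΓΔ : EuclideanSpace ℝ (Fin n) → ℝ)
    (hqhat : ∀ x, qhat x = (1 / 2) * ∑ i, ∑ j, Q i j * x i * x j + ∑ i, c i * x i)
    (hΓLR : ∀ x, ΓLR x = -∑ j, (Real.log (x j - xL j) + Real.log (xR j - x j)))
    (hΓΔ : ∀ x, ΓΔ x = -∑ j, (Real.log (Δ + x j) + Real.log (Δ - x j)))
    (B S Ω : Set (EuclideanSpace ℝ (Fin n)))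
    (hB : B = {x | ∀ j, xL j < x j ∧ x j < xR j})
    (hS : S = {x | ∀ j, -Δ < x j ∧ x j < Δ})
    (hΩ : Ω = B ∩ S) (hne : Ω.Nonempty)
    (hψ : ConvexOn ℝ Ω (fun x => qhat x + (τF / 2) * ΓLR x)) :
    ∀ π : ℝ, 0 < π → π ≤ τF →
      ∀ x ∈ Ω, ∀ v : EuclideanSpace ℝ (Fin n),
        0 ≤ iteratedFDeriv ℝ 2
          (fun y => (8 * τF / π) * ((2 / τF) * qhat y + 2 * ΓLR y) + 16 * ΓΔ y) x ![v, v] ∧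
        |iteratedFDeriv ℝ 3
          (fun y => (8 * τF / π) * ((2 / τF) * qhat y + 2 * ΓLR y) + 16 * ΓΔ y) x ![v, v, v]| ≤
          2 * (iteratedFDeriv ℝ 2
            (fun y => (8 * τF / π) * ((2 / τF) * qhat y + 2 * ΓLR y) + 16 * ΓΔ y) x
              ![v, v]) ^ ((3 : ℝ) / 2) :=
  stmt_16_general n Q c xL xR Δ τF qhat ΓLR ΓΔ hqhat hΓLR hΓΔ B S Ω hB hS hΩ hψ
end
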